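/- Let m > 0, ε > 0 and k ≠ 0 be real. Then the local-interaction linear-stability matrix A₀(k) has an eigenvalue σ ∈ ℂ with Re σ > 0 if and only if m < 1. Moreover, when 0 < m < 1 there is exactly one such eigenvalue, and it is real and positive; when m ≥ 1 every eigenvalue of A₀(k) has nonpositive real part. -/

import Mathlib

/-!
`A₀(k)` has the block form `[[a I, c J], [d I, -b I]]` with `J` the swap matrix, so its
characteristic polynomial factors as `(q(σ) - c d) (q(σ) + c d)` with `q(σ) = (σ - a) (σ + b)`.
Both factors are real quadratics `σ² + B σ + C` with `B = b - a > 0`, and such a quadratic has a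
root with positive real part iff `C < 0`; that root is then unique and real, since the imaginary
part of the equation reads `Im σ (2 Re σ + B) = 0`. The constant `-a b - c d` is positive, while
`c d - a b = k² m² (m - 1) / (ε (1 + m)²)` is negative exactly when `m < 1`.
-/

/-- The local-interaction (`δ → 0`) linear-stability matrix `A₀(k)` for parameters
`m, ε` and wavenumber `k`:
`A₀(k) = [[a,0,0,c],[0,a,c,0],[d,0,−b,0],[0,d,0,−b]]` with
`a = (1/(1+m)² − 1)k²`, `b = (1+m)/ε`, `c = −2(2 − 1/(1+m))k²`, `d = m/(ε(1+m))`. -/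
noncomputable def A0 (m ε k : ℝ) : Matrix (Fin 4) (Fin 4) ℝ :=
  !![(1 / (1 + m) ^ 2 - 1) * k ^ 2, 0, 0, -2 * (2 - 1 / (1 + m)) * k ^ 2;
     0, (1 / (1 + m) ^ 2 - 1) * k ^ 2, -2 * (2 - 1 / (1 + m)) * k ^ 2, 0;
     m / (ε * (1 + m)), 0, -((1 + m) / ε), 0;
     0, m / (ε * (1 + m)), 0, -((1 + m) / ε)]

/-- `σ ∈ ℂ` is an eigenvalue of the real matrix `M`. -/
def IsEigC (M : Matrix (Fin 4) (Fin 4) ℝ) (σ : ℂ) : Prop :=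
  (M.map (fun x : ℝ => (x : ℂ)) - σ • 1).det = 0

section Quadratic

variable {B C : ℝ} {σ : ℂ}

theorem im_eq_zero_of_quadratic_eq_zero (hB : 0 ≤ B) (h : σ ^ 2 + B * σ + C = 0)
    (hre : 0 < σ.re) : σ.im = 0 := by
  have him := congrArg Complex.im h
  simp only [sq, Complex.add_im, Complex.mul_im, Complex.ofReal_re, Complex.ofReal_im,
    Complex.zero_im] at him
  have hfactor : σ.im * (2 * σ.re + B) = 0 := by linarith
  exact (mul_eq_zero.1 hfactor).resolve_right (by linarith)

theorem quadratic_re_eq_zero_of_im_eq_zero (h : σ ^ 2 + B * σ + C = 0) (him : σ.im = 0) :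
    σ.re ^ 2 + B * σ.re + C = 0 := by
  have hre := congrArg Complex.re h
  simp only [sq, Complex.add_re, Complex.mul_re, Complex.ofReal_re, Complex.ofReal_im, him,
    Complex.zero_re] at hre
  linarith

theorem re_nonpos_of_quadratic_eq_zero (hB : 0 ≤ B) (hC : 0 ≤ C)
    (h : σ ^ 2 + B * σ + C = 0) : σ.re ≤ 0 := by
  by_contra! hre
  have hreal := quadratic_re_eq_zero_of_im_eq_zero h (im_eq_zero_of_quadratic_eq_zero hB h hre)
  nlinarith

theorem existsUnique_quadratic_eq_zero_re_pos (hB : 0 ≤ B) (hC : C < 0) :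
    ∃! σ : ℂ, σ ^ 2 + B * σ + C = 0 ∧ 0 < σ.re := by
  obtain ⟨x, hx, hroot⟩ : ∃ x : ℝ, 0 < x ∧ x ^ 2 + B * x + C = 0 := by
    have hsqrt : √(B ^ 2 - 4 * C) ^ 2 = B ^ 2 - 4 * C := Real.sq_sqrt (by nlinarith)
    have hsqrt_gt : B < √(B ^ 2 - 4 * C) := by nlinarith [Real.sqrt_nonneg (B ^ 2 - 4 * C)]
    exact ⟨(√(B ^ 2 - 4 * C) - B) / 2, by linarith, by linear_combination hsqrt / 4⟩
  refine ⟨x, ⟨by exact_mod_cast congrArg (fun t : ℝ => (t : ℂ)) hroot, by simpa using hx⟩, ?_⟩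
  rintro σ ⟨h, hre⟩
  have him := im_eq_zero_of_quadratic_eq_zero hB h hre
  have hreal := quadratic_re_eq_zero_of_im_eq_zero h him
  have hfactor : (σ.re - x) * (σ.re + x + B) = 0 := by linear_combination hreal - hroot
  have hσx : σ.re = x := by
    linarith [(mul_eq_zero.1 hfactor).resolve_right (by linarith)]
  exact Complex.ext (by simpa using hσx) (by simpa using him)

theorem exists_quadratic_eq_zero_re_pos_iff (hB : 0 ≤ B) :
    (∃ σ : ℂ, σ ^ 2 + B * σ + C = 0 ∧ 0 < σ.re) ↔ C < 0 := by
  refine ⟨fun ⟨σ, h, hre⟩ => ?_, fun hC => (existsUnique_quadratic_eq_zero_re_pos hB hC).exists⟩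
  by_contra! hC
  exact hre.not_ge (re_nonpos_of_quadratic_eq_zero hB hC h)

end Quadratic

theorem Matrix.det_swapBlock {R : Type*} [CommRing R] (α β c d : R) :
    !![α, 0, 0, c; 0, α, c, 0; d, 0, β, 0; 0, d, 0, β].det
      = (α * β - c * d) * (α * β + c * d) := by
  simp [Matrix.det_succ_row_zero, Fin.sum_univ_succ, Fin.succAbove]
  ring

def swapBlockMatrix (a b c d : ℝ) : Matrix (Fin 4) (Fin 4) ℝ :=
  !![a, 0, 0, c; 0, a, c, 0; d, 0, -b, 0; 0, d, 0, -b]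

section SwapBlock

variable {a b c d : ℝ} {σ : ℂ}

theorem isEigC_swapBlockMatrix_iff :
    IsEigC (swapBlockMatrix a b c d) σ ↔
      σ ^ 2 + ↑(b - a) * σ + ↑(-(a * b) - c * d) = 0 ∨
        σ ^ 2 + ↑(b - a) * σ + ↑(c * d - a * b) = 0 := by
  have hmatrix : (swapBlockMatrix a b c d).map (fun x : ℝ => (x : ℂ)) - σ • 1 =
      !![↑a - σ, 0, 0, ↑c; 0, ↑a - σ, ↑c, 0; ↑d, 0, -↑b - σ, 0; 0, ↑d, 0, -↑b - σ] := by
    ext i j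
    fin_cases i <;> fin_cases j <;> simp [swapBlockMatrix]
  rw [IsEigC, hmatrix, Matrix.det_swapBlock, mul_eq_zero]
  push_cast
  ring_nf

/-- The other factor, with constant term `-a b - c d ≥ 0`, has no root with positive real part. -/
theorem isEigC_swapBlockMatrix_and_re_pos_iff (hab : a ≤ b) (hcd : c * d ≤ -(a * b)) :
    IsEigC (swapBlockMatrix a b c d) σ ∧ 0 < σ.re ↔
      σ ^ 2 + ↑(b - a) * σ + ↑(c * d - a * b) = 0 ∧ 0 < σ.re := by
  rw [isEigC_swapBlockMatrix_iff, or_and_right, or_iff_right]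
  rintro ⟨h, hre⟩
  exact hre.not_ge (re_nonpos_of_quadratic_eq_zero (by linarith) (by linarith) h)

end SwapBlock

namespace A0

noncomputable def a (m k : ℝ) : ℝ := (1 / (1 + m) ^ 2 - 1) * k ^ 2

noncomputable def b (m ε : ℝ) : ℝ := (1 + m) / ε

noncomputable def c (m k : ℝ) : ℝ := -2 * (2 - 1 / (1 + m)) * k ^ 2

noncomputable def d (m ε : ℝ) : ℝ := m / (ε * (1 + m))

theorem eq_swapBlockMatrix (m ε k : ℝ) :
    A0 m ε k = swapBlockMatrix (a m k) (b m ε) (c m k) (d m ε) :=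
  rfl

variable {m ε k : ℝ}

theorem a_neg (hm : 0 < m) (hk : k ≠ 0) : a m k < 0 := by
  have hinv : 1 / (1 + m) ^ 2 < 1 := (div_lt_one (by positivity)).2 (by nlinarith)
  exact mul_neg_of_neg_of_pos (by linarith) (by positivity)

theorem b_pos (hm : 0 < m) (hε : 0 < ε) : 0 < b m ε := by
  unfold b
  positivity

theorem c_neg (hm : 0 < m) (hk : k ≠ 0) : c m k < 0 := by
  have hinv : 1 / (1 + m) < 1 := (div_lt_one (by positivity)).2 (by linarith)
  exact mul_neg_of_neg_of_pos (by linarith) (by positivity)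

theorem d_pos (hm : 0 < m) (hε : 0 < ε) : 0 < d m ε := by
  unfold d
  positivity

theorem a_mul_b_sub_c_mul_d (hm : 1 + m ≠ 0) (hε : ε ≠ 0) :
    a m k * b m ε - c m k * d m ε = k ^ 2 * m ^ 2 / (ε * (1 + m) ^ 2) * (1 - m) := by
  unfold a b c d
  field_simp
  ring

theorem c_mul_d_lt_a_mul_b_iff (hm : 0 < m) (hε : 0 < ε) (hk : k ≠ 0) :
    c m k * d m ε < a m k * b m ε ↔ m < 1 := by
  rw [← sub_pos, a_mul_b_sub_c_mul_d (by positivity) hε.ne', mul_pos_iff_of_pos_left (by positivity), sub_pos]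

end A0

/-- For `m > 0`, `ε > 0`, `k ≠ 0`: the matrix `A₀(k)` has an
eigenvalue with positive real part iff `m < 1`; when `0 < m < 1` there is exactly one
such eigenvalue and it is real (hence real and positive); when `m ≥ 1` every
eigenvalue has nonpositive real part. -/
theorem local_instability_iff_m_lt_one
    (m ε k : ℝ) (hm : 0 < m) (hε : 0 < ε) (hk : k ≠ 0) :
    ((∃ σ : ℂ, IsEigC (A0 m ε k) σ ∧ 0 < σ.re) ↔ m < 1) ∧
    (m < 1 →
      (∃! σ : ℂ, IsEigC (A0 m ε k) σ ∧ 0 < σ.re) ∧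
      (∀ σ : ℂ, IsEigC (A0 m ε k) σ → 0 < σ.re → σ.im = 0)) ∧
    (1 ≤ m → ∀ σ : ℂ, IsEigC (A0 m ε k) σ → σ.re ≤ 0) := by
  have ha := A0.a_neg hm hk
  have hb := A0.b_pos hm hε
  have hab : A0.a m k ≤ A0.b m ε := by linarith
  have hcd : A0.c m k * A0.d m ε ≤ -(A0.a m k * A0.b m ε) := by
    linarith [mul_neg_of_neg_of_pos ha hb,
      mul_neg_of_neg_of_pos (A0.c_neg hm hk) (A0.d_pos hm hε)]
  have hB : 0 ≤ A0.b m ε - A0.a m k := sub_nonneg.2 hab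
  have hC : A0.c m k * A0.d m ε - A0.a m k * A0.b m ε < 0 ↔ m < 1 :=
    sub_neg.trans (A0.c_mul_d_lt_a_mul_b_iff hm hε hk)
  have hroots (σ : ℂ) : IsEigC (A0 m ε k) σ ∧ 0 < σ.re ↔
      σ ^ 2 + ↑(A0.b m ε - A0.a m k) * σ + ↑(A0.c m k * A0.d m ε - A0.a m k * A0.b m ε) = 0 ∧
        0 < σ.re := by
    rw [A0.eq_swapBlockMatrix]
    exact isEigC_swapBlockMatrix_and_re_pos_iff hab hcd
  have hunstable : (∃ σ : ℂ, IsEigC (A0 m ε k) σ ∧ 0 < σ.re) ↔ m < 1 := by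
    simp only [hroots]
    exact (exists_quadratic_eq_zero_re_pos_iff hB).trans hC
  refine ⟨hunstable, fun hm1 ↦ ⟨?_, fun σ hσ hre ↦ ?_⟩, fun hm1 σ hσ ↦ ?_⟩
  · rw [existsUnique_congr hroots]
    exact existsUnique_quadratic_eq_zero_re_pos hB (hC.2 hm1)
  · exact im_eq_zero_of_quadratic_eq_zero hB ((hroots σ).1 ⟨hσ, hre⟩).1 hre
  · by_contra! hre
    exact hm1.not_gt (hunstable.1 ⟨σ, hσ, hre⟩)
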